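/- arXiv:2508.06812 — 3 statements merged into one kernel-verified Lean document; each statement's English description precedes it below -/
import Mathlib

section
/- Let p be an odd prime and G = D_p × D_p. In the superpower graph S_G, the degree of the identity element is 4p² − 1, the degree of each element of order 2 is 3p², the degree of each element of order 2p is 4p² − 1, and the degree of each element of order p is 3p² − 2p − 1. -/
def superpowerGraph (G : Type*) [Group G] : SimpleGraph G where
  Adj a b := a ≠ b ∧ (orderOf a ∣ orderOf b ∨ orderOf b ∣ orderOf a)
  symm := ⟨fun _ _ h => ⟨h.1.symm, h.2.symm⟩⟩
  loopless := ⟨fun _ h => h.1 rfl⟩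

noncomputable instance (G : Type*) [Group G] [DecidableEq G] :
    DecidableRel (superpowerGraph G).Adj :=
  fun _ _ => instDecidableAnd

/-!
In `D_p × D_p` every element order divides `2p`, so it is `1`, `2`, `p` or `2p`. Elements of order
`1` or `2p` are therefore adjacent to everything, while an element of order `2` misses exactly the
`p² - 1` elements of order `p`, and one of order `p` misses exactly the `(p + 1)² - 1` elements of
order `2`. These two counts follow from `D_p` having `p` elements of order dividing `p` (the
rotations) and `p + 1` of order dividing `2` (the identity and the reflections).
-/

open Finset

lemma superpowerGraph_degree_add_card_incomparable {G : Type*} [Group G] [Fintype G]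
    [DecidableEq G] (g : G) :
    (superpowerGraph G).degree g +
        #{b : G | ¬(orderOf g ∣ orderOf b ∨ orderOf b ∣ orderOf g)} + 1 =
      Fintype.card G := by
  have hnbr : (superpowerGraph G).neighborFinset g =
      ({b | orderOf g ∣ orderOf b ∨ orderOf b ∣ orderOf g} : Finset G).erase g := by
    ext b
    rw [SimpleGraph.mem_neighborFinset]
    simp [superpowerGraph, eq_comm]
  rw [← SimpleGraph.card_neighborFinset_eq_degree, hnbr, add_right_comm,
    card_erase_add_one (mem_filter.mpr ⟨mem_univ g, .inl dvd_rfl⟩),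
    card_filter_add_card_filter_not, card_univ]

lemma card_filter_orderOf_dvd_prod {A B : Type*} [Monoid A] [Monoid B] [Fintype A] [Fintype B]
    (n : ℕ) :
    #{x : A × B | orderOf x ∣ n} = #{a : A | orderOf a ∣ n} * #{b : B | orderOf b ∣ n} := by
  rw [← card_product, ← filter_product, ← univ_product_univ]
  simp only [Prod.orderOf, Nat.lcm_dvd_iff]

lemma card_filter_orderOf_dvd_prime {M : Type*} [Monoid M] [Fintype M] [DecidableEq M] {q : ℕ}
    (hq : q.Prime) : #{x : M | orderOf x ∣ q} = #{x : M | orderOf x = q} + 1 := by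
  have hfilter :
      ({x | orderOf x ∣ q} : Finset M) = insert 1 ({x | orderOf x = q} : Finset M) := by
    ext x
    simp [Nat.dvd_prime hq, orderOf_eq_one_iff]
  rw [hfilter, card_insert_of_notMem (by simp [hq.ne_one.symm])]

namespace DihedralGroup

lemma orderOf_r_dvd {n : ℕ} (i : ZMod n) : orderOf (r i) ∣ n :=
  orderOf_dvd_of_pow_eq_one (by simp [r_pow, r_zero])

variable {n : ℕ} [NeZero n]

lemma card_filter_eq_add (P : DihedralGroup n → Prop) [DecidablePred P] :
    #{a | P a} = #{i | P (r i)} + #{i | P (sr i)} := by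
  simp only [_root_.Finset.card_filter]
  rw [← Fintype.sum_equiv equivSum.symm (fun s => if P (equivSum.symm s) then 1 else 0)
    (fun a => if P a then 1 else 0) (fun _ => rfl), Fintype.sum_sum_type]
  rfl

lemma orderOf_dvd_two_mul (a : DihedralGroup n) : orderOf a ∣ 2 * n :=
  card (n := n) ▸ orderOf_dvd_card

lemma card_filter_orderOf_dvd_self (hn : Odd n) :
    #{a : DihedralGroup n | orderOf a ∣ n} = n := by
  simp [card_filter_eq_add, orderOf_r_dvd, orderOf_sr, ← even_iff_two_dvd,
    Nat.not_even_iff_odd.mpr hn]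

lemma card_filter_orderOf_dvd_two (hn : Odd n) :
    #{a : DihedralGroup n | orderOf a ∣ 2} = n + 1 := by
  have hr : ∀ i : ZMod n, orderOf (r i) ∣ 2 ↔ i = 0 := fun i => by
    refine ⟨fun h => ?_, fun h => by simp [h, r_zero]⟩
    have h1 : orderOf (r i) = 1 :=
      Nat.eq_one_of_dvd_coprimes (Nat.coprime_two_left.mpr hn) h (orderOf_r_dvd i)
    simpa [← r_zero] using orderOf_eq_one_iff.mp h1
  simp [card_filter_eq_add, hr, orderOf_sr, filter_eq', add_comm]

lemma card_prod_filter_orderOf_eq_self (hn : n.Prime) (hn2 : n ≠ 2) :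
    #{x : DihedralGroup n × DihedralGroup n | orderOf x = n} + 1 = n ^ 2 := by
  rw [← card_filter_orderOf_dvd_prime hn, card_filter_orderOf_dvd_prod,
    card_filter_orderOf_dvd_self (hn.odd_of_ne_two hn2), sq]

lemma card_prod_filter_orderOf_eq_two (hn : Odd n) :
    #{x : DihedralGroup n × DihedralGroup n | orderOf x = 2} + 1 = n ^ 2 + 2 * n + 1 := by
  rw [← card_filter_orderOf_dvd_prime Nat.prime_two, card_filter_orderOf_dvd_prod,
    card_filter_orderOf_dvd_two hn]
  ring

end DihedralGroup

lemma Nat.Prime.eq_one_or_two_or_self_or_two_mul_of_dvd {p d : ℕ} (hp : p.Prime)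
    (hd : d ∣ 2 * p) : d = 1 ∨ d = 2 ∨ d = p ∨ d = 2 * p := by
  obtain ⟨a, b, ha, hb, rfl⟩ := Nat.dvd_mul.mp hd
  rcases (Nat.dvd_prime Nat.prime_two).mp ha with rfl | rfl <;>
    rcases (Nat.dvd_prime hp).mp hb with rfl | rfl <;> simp

lemma Nat.Prime.not_two_dvd_or_dvd_two_iff {p d : ℕ} (hp : p.Prime) (hp2 : p ≠ 2)
    (hd : d ∣ 2 * p) : ¬(2 ∣ d ∨ d ∣ 2) ↔ d = p := by
  have h2p : ¬2 ∣ p := (hp.odd_of_ne_two hp2).not_two_dvd_nat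
  have hp2' : ¬p ∣ 2 := fun h => hp2 ((Nat.prime_dvd_prime_iff_eq hp Nat.prime_two).mp h)
  rcases hp.eq_one_or_two_or_self_or_two_mul_of_dvd hd with rfl | rfl | rfl | rfl <;>
    simp [h2p, hp2', hp.ne_one.symm, hp.ne_zero, hp2.symm]

lemma Nat.Prime.not_dvd_or_dvd_self_iff {p d : ℕ} (hp : p.Prime) (hp2 : p ≠ 2)
    (hd : d ∣ 2 * p) : ¬(p ∣ d ∨ d ∣ p) ↔ d = 2 := by
  have h2p : ¬2 ∣ p := (hp.odd_of_ne_two hp2).not_two_dvd_nat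
  have hp2' : ¬p ∣ 2 := fun h => hp2 ((Nat.prime_dvd_prime_iff_eq hp Nat.prime_two).mp h)
  rcases hp.eq_one_or_two_or_self_or_two_mul_of_dvd hd with rfl | rfl | rfl | rfl <;>
    simp [h2p, hp2', hp.ne_one, hp2]

theorem stmt4 (p : ℕ) (hp : Fact p.Prime) (hp2 : p ≠ 2) :
    (superpowerGraph (DihedralGroup p × DihedralGroup p)).degree 1 = 4 * p ^ 2 - 1 ∧
    (∀ g : DihedralGroup p × DihedralGroup p, orderOf g = 2 →
      (superpowerGraph _).degree g = 3 * p ^ 2) ∧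
    (∀ g : DihedralGroup p × DihedralGroup p, orderOf g = 2 * p →
      (superpowerGraph _).degree g = 4 * p ^ 2 - 1) ∧
    (∀ g : DihedralGroup p × DihedralGroup p, orderOf g = p →
      (superpowerGraph _).degree g = 3 * p ^ 2 - 2 * p - 1) := by
  have : NeZero p := ⟨hp.out.ne_zero⟩
  have hcard : Fintype.card (DihedralGroup p × DihedralGroup p) = 4 * p ^ 2 := by
    rw [Fintype.card_prod, DihedralGroup.card]; ring
  have hdvd (x : DihedralGroup p × DihedralGroup p) : orderOf x ∣ 2 * p :=
    Prod.orderOf x ▸ Nat.lcm_dvd (DihedralGroup.orderOf_dvd_two_mul _)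
      (DihedralGroup.orderOf_dvd_two_mul _)
  have hcard_p := DihedralGroup.card_prod_filter_orderOf_eq_self hp.out hp2
  have hcard_2 := DihedralGroup.card_prod_filter_orderOf_eq_two (hp.out.odd_of_ne_two hp2)
  have hdeg :=
    superpowerGraph_degree_add_card_incomparable (G := DihedralGroup p × DihedralGroup p)
  refine ⟨?_, fun g hg => ?_, fun g hg => ?_, fun g hg => ?_⟩
  · have h := hdeg 1
    rw [filter_false_of_mem fun b _ => by simp, card_empty] at h
    omega
  · have h := hdeg g
    rw [hg, filter_congr fun b _ => hp.out.not_two_dvd_or_dvd_two_iff hp2 (hdvd b)] at h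
    omega
  · have h := hdeg g
    rw [hg, filter_false_of_mem fun b _ => not_not.mpr (.inr (hdvd b)), card_empty] at h
    omega
  · have h := hdeg g
    rw [hg, filter_congr fun b _ => hp.out.not_dvd_or_dvd_self_iff hp2 (hdvd b)] at h
    omega
end

section
/- Let p be an odd prime and G = D_p × D_p. Then 3p² − 2p is an eigenvalue of the Laplacian matrix of the superpower graph S_G with multiplicity at least p² − 2. -/
open Finset Matrix

theorem Matrix.card_le_rootMultiplicity_charpoly {K m ι : Type*} [Field K] [Fintype m]
    [DecidableEq m] [Fintype ι] (M : Matrix m m K) (μ : K) {v : ι → m → K}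
    (hv : LinearIndependent K v) (hev : ∀ i, M *ᵥ v i = μ • v i) :
    Fintype.card ι ≤ M.charpoly.rootMultiplicity μ := by
  let E := Module.End.eigenspace (Matrix.toLin' M) μ
  have hmem : ∀ i, v i ∈ E := fun i =>
    Module.End.mem_eigenspace_iff.mpr (by rw [Matrix.toLin'_apply, hev i])
  have hvE : LinearIndependent K fun i => (⟨v i, hmem i⟩ : E) := .of_comp E.subtype hv
  calc Fintype.card ι ≤ Module.finrank K E := hvE.fintype_card_le_finrank
    _ ≤ (Matrix.toLin' M).charpoly.rootMultiplicity μ := LinearMap.finrank_eigenspace_le _ _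
    _ = M.charpoly.rootMultiplicity μ := by rw [Matrix.charpoly_toLin']

theorem Pi.linearIndependent_single_sub_single {R α ι : Type*} [Ring R] [DecidableEq α]
    [Fintype ι] {g : ι → α} (hg : Function.Injective g) {u : α} (hu : ∀ i, g i ≠ u) :
    LinearIndependent R fun i => (Pi.single (g i) 1 - Pi.single u 1 : α → R) := by
  classical
  rw [Fintype.linearIndependent_iff]
  intro c hc i
  simpa [Finset.sum_apply, Pi.single_apply, hg.eq_iff, hu i] using congrFun hc (g i)

namespace SimpleGraph

variable {V : Type*} [Fintype V] [DecidableEq V] (G : SimpleGraph V) [DecidableRel G.Adj]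
  {x u : V}

theorem degree_eq_of_closed_twins (hxu : G.Adj x u)
    (htwin : ∀ w, w ≠ x → w ≠ u → (G.Adj w x ↔ G.Adj w u)) : G.degree x = G.degree u := by
  have h : (G.neighborFinset x).erase u = (G.neighborFinset u).erase x := by
    ext w
    simp only [mem_erase, mem_neighborFinset]
    by_cases hwx : w = x
    · subst hwx; simp
    by_cases hwu : w = u
    · subst hwu; simp
    simp only [ne_eq, hwx, hwu, not_false_eq_true, true_and, G.adj_comm x, G.adj_comm u]
    exact htwin w hwx hwu
  rw [← card_neighborFinset_eq_degree, ← card_neighborFinset_eq_degree,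
    ← card_erase_add_one ((G.mem_neighborFinset x u).mpr hxu), h,
    card_erase_add_one ((G.mem_neighborFinset u x).mpr hxu.symm)]

theorem lapMatrix_mulVec_single_sub_single {R : Type*} [Ring R] (hxu : G.Adj x u)
    (htwin : ∀ w, w ≠ x → w ≠ u → (G.Adj w x ↔ G.Adj w u)) :
    G.lapMatrix R *ᵥ (Pi.single x 1 - Pi.single u 1) =
      ((G.degree x + 1 : ℕ) : R) • (Pi.single x 1 - Pi.single u 1) := by
  ext w
  simp only [lapMatrix_mulVec_apply, Pi.sub_apply, sum_sub_distrib, sum_pi_single',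
    mem_neighborFinset, Pi.smul_apply, smul_eq_mul]
  by_cases hwx : w = x
  · subst hwx
    simp [hxu, hxu.ne]
  by_cases hwu : w = u
  · subst hwu
    simp [hxu.symm, hxu.ne, G.degree_eq_of_closed_twins hxu htwin]
    abel
  simp [hwx, hwu, htwin w hwx hwu]

end SimpleGraph

namespace superpowerGraph

variable {G : Type*} [Group G] [Fintype G] [DecidableEq G]

theorem degree_add_one (x : G) :
    (superpowerGraph G).degree x + 1 =
      #{w : G | orderOf w ∣ orderOf x ∨ orderOf x ∣ orderOf w} := by
  have h : ({w | orderOf w ∣ orderOf x ∨ orderOf x ∣ orderOf w} : Finset G) =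
      insert x ((superpowerGraph G).neighborFinset x) := by
    ext w
    simp only [mem_filter, mem_univ, true_and, mem_insert, SimpleGraph.mem_neighborFinset]
    by_cases hw : w = x
    · simp [hw]
    · simp [superpowerGraph, hw, Ne.symm hw, or_comm]
  rw [h, card_insert_of_notMem (by simp), SimpleGraph.card_neighborFinset_eq_degree]

theorem lapMatrix_mulVec_single_sub_single {K : Type*} [Ring K] {x u : G} (hxu : x ≠ u)
    (h : orderOf x = orderOf u) :
    (superpowerGraph G).lapMatrix K *ᵥ (Pi.single x 1 - Pi.single u 1) =
      (#{w : G | orderOf w ∣ orderOf x ∨ orderOf x ∣ orderOf w} : K) •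
        (Pi.single x 1 - Pi.single u 1) := by
  rw [← degree_add_one]
  refine SimpleGraph.lapMatrix_mulVec_single_sub_single _ ⟨hxu, .inl h.dvd⟩ fun w hwx hwu => ?_
  simp only [superpowerGraph, h, hwx, hwu, ne_eq, not_false_eq_true, true_and]

theorem card_orderOf_eq_sub_one_le_rootMultiplicity {K : Type*} [Field K] (u : G) :
    #{x : G | orderOf x = orderOf u} - 1 ≤
      ((superpowerGraph G).lapMatrix K).charpoly.rootMultiplicity
        (#{w : G | orderOf w ∣ orderOf u ∨ orderOf u ∣ orderOf w} : K) := by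
  have hcard : Fintype.card {x : G // orderOf x = orderOf u ∧ x ≠ u} =
      #{x : G | orderOf x = orderOf u} - 1 := by
    rw [Fintype.card_subtype, filter_and, filter_ne', inter_erase, inter_univ,
      card_erase_of_mem (by simp)]
  rw [← hcard]
  refine Matrix.card_le_rootMultiplicity_charpoly _ _
    (Pi.linearIndependent_single_sub_single Subtype.val_injective fun x => x.2.2) fun x => ?_
  rw [lapMatrix_mulVec_single_sub_single x.2.2 x.2.1, x.2.1]

end superpowerGraph

theorem Finset.card_filter_fst_and_snd {α β : Type*} [Fintype α] [Fintype β] (P : α → Prop)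
    (Q : β → Prop) [DecidablePred P] [DecidablePred Q] :
    #{w : α × β | P w.1 ∧ Q w.2} = #{a | P a} * #{b | Q b} := by
  rw [← card_product, ← filter_product, univ_product_univ]

section PrimeOrder

variable {G : Type*} [Group G] [Fintype G] [DecidableEq G] {p : ℕ} [hp : Fact p.Prime]

theorem card_orderOf_eq_prime : #{x : G | orderOf x = p} = #{x : G | x ^ p = 1} - 1 := by
  have h : ({x | orderOf x = p} : Finset G) = ({x | x ^ p = 1} : Finset G).erase 1 := by
    ext x
    simp [orderOf_eq_prime_iff, and_comm]
  rw [h, card_erase_of_mem (by simp)]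

theorem card_orderOf_dvd_or_prime_dvd :
    #{x : G | orderOf x ∣ p ∨ p ∣ orderOf x} = #{x : G | p ∣ orderOf x} + 1 := by
  have h : ({x | orderOf x ∣ p ∨ p ∣ orderOf x} : Finset G) =
      insert 1 ({x | p ∣ orderOf x} : Finset G) := by
    ext x
    simp only [mem_filter, mem_univ, true_and, mem_insert, Nat.dvd_prime hp.out,
      orderOf_eq_one_iff]
    constructor
    · rintro ((h | h) | h)
      exacts [.inl h, .inr h.symm.dvd, .inr h]
    · rintro (h | h)
      exacts [.inl (.inl h), .inr h]
  rw [h, card_insert_of_notMem (by simp [hp.out.not_dvd_one])]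

end PrimeOrder

section Prod

variable {G H : Type*} [Group G] [Group H] [Fintype G] [Fintype H]

theorem Prod.card_pow_eq_one [DecidableEq G] [DecidableEq H] (n : ℕ) :
    #{w : G × H | w ^ n = 1} = #{a : G | a ^ n = 1} * #{b : H | b ^ n = 1} := by
  rw [← card_filter_fst_and_snd]
  simp only [Prod.ext_iff, Prod.pow_fst, Prod.pow_snd, Prod.fst_one, Prod.snd_one]

theorem Prod.card_not_prime_dvd_orderOf {p : ℕ} (hp : p.Prime) :
    #{w : G × H | ¬ p ∣ orderOf w} =
      #{a : G | ¬ p ∣ orderOf a} * #{b : H | ¬ p ∣ orderOf b} := by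
  rw [← card_filter_fst_and_snd]
  simp only [Prod.orderOf, hp.dvd_lcm, not_or]

end Prod

namespace DihedralGroup

theorem card_pow_eq_one_of_odd {n : ℕ} [NeZero n] (hn : Odd n) :
    #{x : DihedralGroup n | x ^ n = 1} = n := by
  have h : ({x | x ^ n = 1} : Finset (DihedralGroup n)) = univ.map ⟨r, fun _ _ => r.inj⟩ := by
    ext x
    simp only [mem_filter, mem_univ, true_and, mem_map]
    cases x with
    | r i => exact iff_of_true (by simp [r_pow]) ⟨i, rfl⟩
    | sr i =>
      obtain ⟨k, rfl⟩ := hn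
      rw [pow_succ, pow_mul, sq, sr_mul_self, one_pow, one_mul, one_def]
      simp [-r_zero]
  rw [h, card_map, card_univ, ZMod.card]

variable {p : ℕ} [hp : Fact p.Prime]

theorem orderOf_eq_of_prime_dvd (hp2 : p ≠ 2) {x : DihedralGroup p} (h : p ∣ orderOf x) :
    orderOf x = p := by
  cases x with
  | r i => exact Nat.dvd_antisymm (orderOf_dvd_of_pow_eq_one (by simp [r_pow])) h
  | sr i =>
    rw [orderOf_sr] at h
    exact absurd ((Nat.prime_dvd_prime_iff_eq hp.out Nat.prime_two).mp h) hp2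

theorem card_not_prime_dvd_orderOf (hp2 : p ≠ 2) :
    #{x : DihedralGroup p | ¬ p ∣ orderOf x} = p + 1 := by
  have hdvd : #{x : DihedralGroup p | p ∣ orderOf x} = p - 1 := by
    rw [filter_congr fun x _ => ⟨orderOf_eq_of_prime_dvd hp2, fun h => by rw [h]⟩,
      card_orderOf_eq_prime, card_pow_eq_one_of_odd (hp.out.odd_of_ne_two hp2)]
  have := card_filter_add_card_filter_not (s := univ) fun x : DihedralGroup p => p ∣ orderOf x
  rw [hdvd, card_univ, card] at this
  have := hp.out.one_le
  omega

theorem card_prod_self_orderOf_eq_prime (hp2 : p ≠ 2) :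
    #{w : DihedralGroup p × DihedralGroup p | orderOf w = p} = p ^ 2 - 1 := by
  rw [card_orderOf_eq_prime, Prod.card_pow_eq_one,
    card_pow_eq_one_of_odd (hp.out.odd_of_ne_two hp2), sq]

theorem card_prod_self_orderOf_dvd_or_prime_dvd (hp2 : p ≠ 2) :
    #{w : DihedralGroup p × DihedralGroup p | orderOf w ∣ p ∨ p ∣ orderOf w} + 2 * p =
      3 * p ^ 2 := by
  have hsplit := card_filter_add_card_filter_not (s := univ)
    fun w : DihedralGroup p × DihedralGroup p => p ∣ orderOf w
  rw [Prod.card_not_prime_dvd_orderOf hp.out, card_not_prime_dvd_orderOf hp2, card_univ,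
    Fintype.card_prod, card] at hsplit
  rw [card_orderOf_dvd_or_prime_dvd]
  linarith

end DihedralGroup

theorem stmt8 (p : ℕ) (hp : Fact p.Prime) (hp2 : p ≠ 2) :
    p ^ 2 - 2 ≤
      Polynomial.rootMultiplicity (3 * (p : ℝ) ^ 2 - 2 * p)
        (Matrix.charpoly
          (Matrix.diagonal
              (fun v : DihedralGroup p × DihedralGroup p =>
                ((superpowerGraph _).degree v : ℝ)) -
            (superpowerGraph (DihedralGroup p × DihedralGroup p)).adjMatrix ℝ)) := by
  have hu : orderOf ((DihedralGroup.r 1, 1) : DihedralGroup p × DihedralGroup p) = p := by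
    rw [Prod.orderOf_mk, DihedralGroup.orderOf_r_one, orderOf_one, Nat.lcm_one_right]
  have hμ : (#{w : DihedralGroup p × DihedralGroup p | orderOf w ∣ p ∨ p ∣ orderOf w} : ℝ) =
      3 * p ^ 2 - 2 * p := by
    rw [eq_sub_iff_add_eq]
    exact_mod_cast DihedralGroup.card_prod_self_orderOf_dvd_or_prime_dvd hp2
  have key := superpowerGraph.card_orderOf_eq_sub_one_le_rootMultiplicity (K := ℝ)
    ((DihedralGroup.r 1, 1) : DihedralGroup p × DihedralGroup p)
  rw [hu, DihedralGroup.card_prod_self_orderOf_eq_prime hp2, Nat.sub_sub, hμ] at key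
  exact key
end

section
/- Let p be an odd prime and G = D_p × D_p. Then −1 is an eigenvalue of the adjacency matrix of the superpower graph S_G with multiplicity at least 4p² − 4. -/
/-!
All element orders of `D_p × D_p` divide `2p`, so they lie in `{1, 2, p, 2p}`, and two of them fail
to divide one another only for the pair `{2, p}`. Hence `A + I` has entries
`1 - [o(g) = 2][o(h) = p] - [o(g) = p][o(h) = 2]`, a product of a `|G| × 3` and a `3 × |G|` matrix.
Since `AB` and `BA` have the same characteristic polynomial up to a power of `X`,
`(X + 1)^(|G| - 3)` divides the characteristic polynomial of `A`.
-/

open Polynomial Matrix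

namespace Matrix

variable {n k R : Type*} [Fintype n] [Fintype k] [DecidableEq n] [DecidableEq k]
  [CommRing R] [Nontrivial R]

theorem card_sub_card_le_rootMultiplicity_charpoly_of_sub_scalar_eq_mul {M : Matrix n n R}
    {μ : R} {U : Matrix n k R} {V : Matrix k n R} (h : M - scalar n μ = U * V) :
    Fintype.card n - Fintype.card k ≤ M.charpoly.rootMultiplicity μ := by
  rcases le_total (Fintype.card n) (Fintype.card k) with hle | hle
  · simp [Nat.sub_eq_zero_of_le hle]
  rw [rootMultiplicity_eq_rootMultiplicity, ← charpoly_sub_scalar, h,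
    charpoly_mul_comm_of_le U V hle]
  have hne : X ^ (Fintype.card n - Fintype.card k) * (V * U).charpoly ≠ 0 :=
    ((monic_X_pow _).mul (charpoly_monic _)).ne_zero
  exact (le_rootMultiplicity_iff hne).2 (by simp)

end Matrix

namespace Nat

theorem eq_one_or_two_or_self_or_two_mul_of_dvd_two_mul {p a : ℕ} (hp : p.Prime)
    (ha : a ∣ 2 * p) : a = 1 ∨ a = 2 ∨ a = p ∨ a = 2 * p := by
  obtain ⟨d, e, hd, he, rfl⟩ := dvd_mul.mp ha
  rcases (dvd_prime prime_two).mp hd with rfl | rfl <;>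
    rcases (dvd_prime hp).mp he with rfl | rfl <;> simp

theorem dvd_or_dvd_iff_of_dvd_two_mul {p a b : ℕ} (hp : p.Prime) (hp2 : p ≠ 2)
    (ha : a ∣ 2 * p) (hb : b ∣ 2 * p) :
    a ∣ b ∨ b ∣ a ↔ ¬(a = 2 ∧ b = p ∨ a = p ∧ b = 2) := by
  have hp3 : 3 ≤ p := by have := hp.two_le; omega
  have htwo_dvd : ¬2 ∣ p := fun h => hp2 ((prime_dvd_prime_iff_eq prime_two hp).1 h).symm
  have hdvd_two : ¬p ∣ 2 := fun h => by have := le_of_dvd two_pos h; omega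
  rcases eq_one_or_two_or_self_or_two_mul_of_dvd_two_mul hp ha with rfl | rfl | rfl | rfl <;>
    rcases eq_one_or_two_or_self_or_two_mul_of_dvd_two_mul hp hb with rfl | rfl | rfl | rfl <;>
    simp [htwo_dvd, hdvd_two] <;> omega

end Nat

section SuperpowerGraph

variable {G : Type*} [Group G] [DecidableEq G] (R : Type*)

theorem superpowerGraph_adjMatrix_add_one_apply [AddMonoidWithOne R] (g h : G) :
    ((superpowerGraph G).adjMatrix R + 1) g h =
      if orderOf g ∣ orderOf h ∨ orderOf h ∣ orderOf g then 1 else 0 := by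
  rw [Matrix.add_apply, SimpleGraph.adjMatrix_apply]
  by_cases hgh : g = h
  · subst hgh
    simp [superpowerGraph]
  · simp [superpowerGraph, hgh, one_apply_ne hgh]

theorem superpowerGraph_adjMatrix_add_one_eq_mul [Ring R] {p : ℕ} (hp : p.Prime) (hp2 : p ≠ 2)
    (hG : Monoid.exponent G ∣ 2 * p) :
    ∃ (U : Matrix G (Fin 3) R) (V : Matrix (Fin 3) G R),
      (superpowerGraph G).adjMatrix R + 1 = U * V := by
  let a : G → R := fun g => if orderOf g = 2 then 1 else 0
  let b : G → R := fun g => if orderOf g = p then 1 else 0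
  refine ⟨of fun g => ![1, a g, b g], of fun j h => ![1, -b h, -a h] j, ?_⟩
  ext g h
  have hdvd x := (Monoid.order_dvd_exponent x).trans hG
  rw [superpowerGraph_adjMatrix_add_one_apply,
    if_congr (Nat.dvd_or_dvd_iff_of_dvd_two_mul hp hp2 (hdvd g) (hdvd h)) rfl rfl]
  simp only [mul_apply, Fin.sum_univ_three, of_apply, a, b]
  by_cases hg2 : orderOf g = 2 <;> by_cases hgp : orderOf g = p <;>
    by_cases hh2 : orderOf h = 2 <;> by_cases hhp : orderOf h = p <;> simp_all

theorem card_sub_three_le_rootMultiplicity_neg_one_charpoly_superpowerGraph [Fintype G]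
    [CommRing R] [Nontrivial R] {p : ℕ} (hp : p.Prime) (hp2 : p ≠ 2) (hG : Monoid.exponent G ∣ 2 * p) :
    Fintype.card G - 3 ≤ ((superpowerGraph G).adjMatrix R).charpoly.rootMultiplicity (-1) := by
  obtain ⟨U, V, hUV⟩ := superpowerGraph_adjMatrix_add_one_eq_mul R hp hp2 hG
  refine card_sub_card_le_rootMultiplicity_charpoly_of_sub_scalar_eq_mul (U := U) (V := V) ?_
  rwa [map_neg, map_one, sub_neg_eq_add]

end SuperpowerGraph

theorem DihedralGroup.exponent_prod_self_dvd (n : ℕ) :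
    Monoid.exponent (DihedralGroup n × DihedralGroup n) ∣ 2 * n := by
  rw [Monoid.exponent_prod, DihedralGroup.exponent, lcm_same, normalize_eq]
  exact lcm_dvd (dvd_mul_left n 2) (dvd_mul_right 2 n)

theorem stmt10 (p : ℕ) (hp : Fact p.Prime) (hp2 : p ≠ 2) :
    4 * p ^ 2 - 4 ≤
      Polynomial.rootMultiplicity (-1 : ℝ)
        (Matrix.charpoly
          ((superpowerGraph (DihedralGroup p × DihedralGroup p)).adjMatrix ℝ)) := by
  have hcard : Fintype.card (DihedralGroup p × DihedralGroup p) = 4 * p ^ 2 := by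
    rw [Fintype.card_prod, DihedralGroup.card]
    ring
  have hmult := card_sub_three_le_rootMultiplicity_neg_one_charpoly_superpowerGraph ℝ hp.out hp2
    (DihedralGroup.exponent_prod_self_dvd p)
  omega
end
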